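/- Let V be a type of vertices, let c : V → V → ℝ → ℝ be a time-dependent edge cost function and c̲ : V → V → ℝ a static edge cost function with 0 ≤ c̲ u v ≤ c u v t for all u, v ∈ V and t ∈ ℝ. Fix v ∈ V, a set S ⊆ V, and a departure time t ∈ ℝ, and suppose there exists at least one route from v ending at a vertex of S. Then the infimum, over all routes p from v ending at a vertex of S, of the time-dependent travel time of p departing at t, is at least L(v, S), the infimum over the same routes of the static cost under c̲. In particular, the precomputed lower bound L(v, S) is a valid lower bound for the time-dependent distance from v to its nearest vertex of S regardless of the departure time. -/
import Mathlib


/-- Arrival times along a route `p` with departure time `t`: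
`t₀ = t` and `t_{i+1} = t_i + c (p i) (p (i+1)) t_i`. -/
def arrival {V : Type*} (c : V → V → ℝ → ℝ) (p : ℕ → V) (t : ℝ) : ℕ → ℝ
  | 0 => t
  | i + 1 => arrival c p t i + c (p i) (p (i + 1)) (arrival c p t i)

/-- The time-dependent travel time of the route `[p 0, …, p n]` departing at `t`. -/
noncomputable def travelTime {V : Type*} (c : V → V → ℝ → ℝ) (p : ℕ → V)
    (t : ℝ) (n : ℕ) : ℝ :=
  ∑ i ∈ Finset.range n, c (p i) (p (i + 1)) (arrival c p t i)

/-- The static cost of the route `[p 0, …, p n]` under `cl`. -/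
def staticCost {V : Type*} (cl : V → V → ℝ) (p : ℕ → V) (n : ℕ) : ℝ :=
  ∑ i ∈ Finset.range n, cl (p i) (p (i + 1))

/-- `L cl v S`: infimum of static costs of routes starting at `v` and ending in `S`. -/
noncomputable def L {V : Type*} (cl : V → V → ℝ) (v : V) (S : Set V) : ℝ :=
  sInf {x : ℝ | ∃ (n : ℕ) (p : ℕ → V), p 0 = v ∧ p n ∈ S ∧ x = staticCost cl p n}

/-- If `0 ≤ cl u v ≤ c u v t` for all `u, v, t`, and there exists at least one route
from `v` ending at a vertex of `S`, then the infimum over all such routes of the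
time-dependent travel time departing at `t` is at least `L cl v S`, the infimum of
the static costs of the same routes: the precomputed lower bound is valid for the
time-dependent distance from `v` to its nearest vertex of `S`, regardless of the
departure time. -/
theorem L_le_time_dependent_distance
    {V : Type*} (c : V → V → ℝ → ℝ) (cl : V → V → ℝ)
    (hnn : ∀ u w : V, 0 ≤ cl u w)
    (hlb : ∀ u w : V, ∀ t : ℝ, cl u w ≤ c u w t)
    (v : V) (S : Set V) (t : ℝ)
    (hex : ∃ (n : ℕ) (p : ℕ → V), p 0 = v ∧ p n ∈ S) :
    L cl v S ≤
      sInf {x : ℝ | ∃ (n : ℕ) (p : ℕ → V), p 0 = v ∧ p n ∈ S ∧ x = travelTime c p t n} := by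
  obtain ⟨n₀, p₀, h₀, h₀'⟩ := hex
  refine le_csInf ⟨travelTime c p₀ t n₀, n₀, p₀, h₀, h₀', rfl⟩ ?_
  rintro x ⟨n, p, hp, hpS, rfl⟩
  have hbdd : BddBelow {x : ℝ | ∃ (m : ℕ) (q : ℕ → V), q 0 = v ∧ q m ∈ S ∧ x = staticCost cl q m} := by
    refine ⟨0, ?_⟩
    rintro y ⟨m, q, _, _, rfl⟩
    exact Finset.sum_nonneg fun i _ => hnn _ _
  have h1 : L cl v S ≤ staticCost cl p n := csInf_le hbdd ⟨n, p, hp, hpS, rfl⟩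
  refine h1.trans (Finset.sum_le_sum fun i _ => hlb _ _ _)
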